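/- Let d ≥ 2 and let {E_i}_{i=1}^n be a rank-one POVM on ℂ^d (each E_i nonzero of matrix rank one) such that the real linear span of {√E_1, …, √E_n} has dimension d² inside the Hermitian d×d matrices. Then its disturbance satisfies D = Σ_{l,m} (tr(√E_l √E_m))² − 2 Σ_l (tr √E_l)² + d² ≥ d²(d−1)/(d+1); that is, among rank-one informationally complete POVMs the SIC value of the disturbance is minimal. -/

import Mathlib

/-!
Each `√E_l` has rank one, so `√E_l = w_l w_lᴴ`; then `tr(√E_l √E_m) = |⟨w_l, w_m⟩|²`,
`tr √E_l = ‖w_l‖²` and `Σ_l ‖w_l‖⁴ = tr (Σ_l E_l) = d`, and the claim becomes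
`Σ_{l,m} |⟨w_l, w_m⟩|⁴ ≥ 2d / (d + 1)`. This is the Welch bound: the operator
`S = Σ_l (w_l ⊗ w_l)(w_l ⊗ w_l)ᴴ` lives on the symmetric subspace of `ℂ^d ⊗ ℂ^d`, whose projection
`Π` has `tr Π² = d(d+1)/2`, so Cauchy–Schwarz for the Hilbert–Schmidt pairing gives
`d² = (tr S)² = ⟨Π, S⟩² ≤ d(d+1)/2 · tr S² = d(d+1)/2 · Σ_{l,m} |⟨w_l, w_m⟩|⁴`.
-/

open Matrix BigOperators
open scoped ComplexOrder
open Finset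

namespace Matrix.PosSemidef

/-- The positive semidefinite square root of a positive semidefinite matrix
(the definition `Matrix.PosSemidef.sqrt` of Mathlib, December 2024, removed since). -/
noncomputable def sqrt {n 𝕜 : Type*} [Fintype n] [RCLike 𝕜] [DecidableEq n] {A : Matrix n n 𝕜}
    (hA : A.PosSemidef) : Matrix n n 𝕜 :=
  hA.1.eigenvectorUnitary.1 * diagonal ((↑) ∘ (√·) ∘ hA.1.eigenvalues) *
  (star hA.1.eigenvectorUnitary : Matrix n n 𝕜)

end Matrix.PosSemidef

namespace Matrix.PosSemidef

variable {n 𝕜 : Type*} [Fintype n] [RCLike 𝕜] [DecidableEq n] {A : Matrix n n 𝕜}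

lemma posSemidef_sqrt (hA : A.PosSemidef) : hA.sqrt.PosSemidef := by
  refine PosSemidef.mul_mul_conjTranspose_same (posSemidef_diagonal_iff.mpr fun i ↦ ?_) _
  simp only [Function.comp_apply, RCLike.ofReal_nonneg, Real.sqrt_nonneg]

lemma sqrt_mul_self (hA : A.PosSemidef) : hA.sqrt * hA.sqrt = A := by
  set U : Matrix n n 𝕜 := hA.1.eigenvectorUnitary.1
  set D : Matrix n n 𝕜 := diagonal ((↑) ∘ (√·) ∘ hA.1.eigenvalues)
  have hU : star U * U = 1 := Unitary.star_mul_self_of_mem hA.1.eigenvectorUnitary.2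
  have hD : D * D = diagonal ((↑) ∘ hA.1.eigenvalues) := by
    simp only [D, diagonal_mul_diagonal, Function.comp_apply, ← RCLike.ofReal_mul,
      Real.mul_self_sqrt (hA.eigenvalues_nonneg _)]
    rfl
  calc hA.sqrt * hA.sqrt = U * (D * (star U * U) * D) * star U := by
        simp only [sqrt, U, D, mul_assoc]
    _ = A := by
        rw [hU, mul_one, hD]
        exact hA.1.spectral_theorem.symm

lemma rank_sqrt (hA : A.PosSemidef) : hA.sqrt.rank = A.rank := by
  rw [← rank_conjTranspose_mul_self, hA.posSemidef_sqrt.1.eq, sqrt_mul_self]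

theorem exists_eq_vecMulVec_of_rank_eq_one (hA : A.PosSemidef) (h : A.rank = 1) :
    ∃ w : n → 𝕜, A = vecMulVec w (star w) := by
  rw [hA.1.rank_eq_card_non_zero_eigs, Fintype.card_eq_one_iff] at h
  obtain ⟨⟨k, _⟩, hk⟩ := h
  have hev (i : n) (hi : i ≠ k) : hA.1.eigenvalues i = 0 := by
    by_contra h0
    exact hi (congrArg Subtype.val (hk ⟨i, h0⟩))
  set U : Matrix n n 𝕜 := hA.1.eigenvectorUnitary.1
  set c : 𝕜 := RCLike.ofReal √(hA.1.eigenvalues k)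
  have hc : c * c = hA.1.eigenvalues k := by
    rw [← RCLike.ofReal_mul, Real.mul_self_sqrt (hA.eigenvalues_nonneg k)]
  refine ⟨c • fun i ↦ U i k, ?_⟩
  conv_lhs => rw [hA.1.spectral_theorem]
  ext i j
  simp only [Unitary.conjStarAlgAut_apply, mul_apply, diagonal_apply, mul_ite, mul_zero,
    sum_ite_eq', mem_univ, ↓reduceIte, star_apply, Function.comp_apply]
  rw [sum_eq_single k (fun m _ hm ↦ by simp [hev m hm]) (by simp)]
  simp only [vecMulVec_apply, Pi.smul_apply, Pi.star_apply, smul_eq_mul, star_mul', c,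
    RCLike.star_def, RCLike.conj_ofReal]
  linear_combination (U i k * starRingEnd 𝕜 (U j k)) * hc.symm

theorem exists_sqrt_eq_vecMulVec_of_rank_eq_one (hA : A.PosSemidef) (h : A.rank = 1) :
    ∃ w : n → 𝕜, hA.sqrt = vecMulVec w (star w) :=
  hA.posSemidef_sqrt.exists_eq_vecMulVec_of_rank_eq_one (hA.rank_sqrt.trans h)

end Matrix.PosSemidef

lemma Matrix.trace_vecMulVec_star_mul_vecMulVec_star {n : Type*} [Fintype n] (a b : n → ℂ) :
    (vecMulVec a (star a) * vecMulVec b (star b)).trace = Complex.normSq (star a ⬝ᵥ b) := by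
  have h : a ⬝ᵥ star b = star (star a ⬝ᵥ b) := by
    rw [dotProduct_comm, ← star_dotProduct_star, star_star]
  rw [vecMulVec_mul_vecMulVec, trace_vecMulVec, dotProduct_smul, h, smul_eq_mul,
    Complex.star_def, Complex.mul_conj]

lemma Matrix.IsHermitian.trace_mul_self {n : Type*} [Fintype n] {S : Matrix n n ℂ}
    (hS : S.IsHermitian) : (S * S).trace = ∑ P, ∑ Q, (Complex.normSq (S P Q) : ℂ) := by
  simp only [trace, diag_apply, mul_apply]
  refine sum_congr rfl fun P _ ↦ sum_congr rfl fun Q _ ↦ ?_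
  rw [← hS.apply Q P, Complex.star_def, Complex.mul_conj]

lemma Matrix.star_dotProduct_self_eq_re {n : Type*} [Fintype n] (v : n → ℂ) :
    star v ⬝ᵥ v = (star v ⬝ᵥ v).re := by
  rw [eq_comm, ← Complex.conj_eq_iff_re, ← Complex.star_def, ← star_dotProduct_star, star_star]

lemma Matrix.normSq_star_dotProduct_self {n : Type*} [Fintype n] (v : n → ℂ) :
    Complex.normSq (star v ⬝ᵥ v) = (star v ⬝ᵥ v).re ^ 2 := by
  conv_lhs => rw [star_dotProduct_self_eq_re]
  rw [Complex.normSq_ofReal, sq]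

section Tensor

variable {κ : Type*}

def tensorSquare (v : κ → ℂ) : κ × κ → ℂ := fun P ↦ v P.1 * v P.2

lemma tensorSquare_swap (v : κ → ℂ) (P : κ × κ) : tensorSquare v P.swap = tensorSquare v P :=
  mul_comm _ _

lemma star_tensorSquare_dotProduct [Fintype κ] (v u : κ → ℂ) :
    star (tensorSquare v) ⬝ᵥ tensorSquare u = (star v ⬝ᵥ u) ^ 2 := by
  simp only [dotProduct, Fintype.sum_prod_type, sq, sum_mul_sum, tensorSquare, Pi.star_apply,
    star_mul']
  exact sum_congr rfl fun i _ ↦ sum_congr rfl fun j _ ↦ by ring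

lemma sum_ite_swap_eq_self [Fintype κ] [DecidableEq κ] :
    ∑ P : κ × κ, (if P.swap = P then (1 : ℝ) else 0) = Fintype.card κ := by
  have hdiag : ({P | P.swap = P} : Finset (κ × κ)) = univ.diag := by
    ext P; simp [Prod.ext_iff, eq_comm]
  rw [sum_boole, hdiag, diag_card, card_univ]

theorem sq_sum_re_diag_le_of_swap_invariant [Fintype κ] (S : Matrix (κ × κ) (κ × κ) ℂ)
    (hS : ∀ P Q, S P Q.swap = S P Q) :
    (∑ P, (S P P).re) ^ 2
      ≤ (Fintype.card κ * (Fintype.card κ + 1) / 2 : ℝ) * ∑ P, ∑ Q, Complex.normSq (S P Q) := by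
  classical
  -- `c` is twice the projection onto the symmetric subspace
  set c : κ × κ → κ × κ → ℝ := fun P Q ↦
    (if Q = P then 1 else 0) + (if Q = P.swap then 1 else 0)
  have hcS : ∑ P, ∑ Q, c P Q * (S P Q).re = 2 * ∑ P, (S P P).re := by
    rw [mul_sum]
    refine sum_congr rfl fun P _ ↦ ?_
    simp only [c, add_mul, ite_mul, one_mul, zero_mul, sum_add_distrib, sum_ite_eq', mem_univ,
      ↓reduceIte, hS]
    ring
  have hc : ∑ P, ∑ Q, c P Q ^ 2 = 2 * (Fintype.card κ * (Fintype.card κ + 1) : ℝ) := by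
    have hrow (P : κ × κ) : ∑ Q, c P Q ^ 2 = 2 + 2 * (if P.swap = P then 1 else 0) := by
      simp only [c, add_sq, ite_pow, one_pow, ne_eq, OfNat.ofNat_ne_zero, not_false_eq_true,
        zero_pow, mul_ite, mul_one, mul_zero, sum_add_distrib, sum_ite_eq', mem_univ, ↓reduceIte]
      ring
    simp only [hrow, sum_add_distrib, ← mul_sum, sum_ite_swap_eq_self]
    simp only [sum_const, card_univ, Fintype.card_prod, nsmul_eq_mul, Nat.cast_mul]
    ring
  have hcs := sum_mul_sq_le_sq_mul_sq (univ ×ˢ univ) (fun PQ ↦ c PQ.1 PQ.2)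
    (fun PQ ↦ (S PQ.1 PQ.2).re)
  simp only [sum_product, hcS, hc] at hcs
  have hre : ∑ P, ∑ Q, (S P Q).re ^ 2 ≤ ∑ P, ∑ Q, Complex.normSq (S P Q) :=
    sum_le_sum fun P _ ↦ sum_le_sum fun Q _ ↦ by simpa [sq] using Complex.re_sq_le_normSq _
  have hd : (0 : ℝ) ≤ Fintype.card κ * (Fintype.card κ + 1) := by positivity
  nlinarith [mul_le_mul_of_nonneg_left hre hd]

theorem welch_bound_two {ι : Type*} [Fintype ι] [Fintype κ] (w : ι → κ → ℂ) :
    (∑ l, (star (w l) ⬝ᵥ w l).re ^ 2) ^ 2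
      ≤ (Fintype.card κ * (Fintype.card κ + 1) / 2 : ℝ)
          * ∑ l, ∑ m, Complex.normSq (star (w l) ⬝ᵥ w m) ^ 2 := by
  set F : ι → Matrix (κ × κ) (κ × κ) ℂ := fun l ↦
    vecMulVec (tensorSquare (w l)) (star (tensorSquare (w l)))
  set S := ∑ l, F l
  have hS : S.IsHermitian := isSelfAdjoint_sum univ fun l _ ↦
    (posSemidef_vecMulVec_self_star _).isHermitian
  have hswap (P Q : κ × κ) : S P Q.swap = S P Q := by
    simp [S, F, Matrix.sum_apply, vecMulVec_apply, tensorSquare_swap]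
  have hdiag : ∑ P, (S P P).re = ∑ l, (star (w l) ⬝ᵥ w l).re ^ 2 := by
    have htrace : ∑ P, S P P = ∑ l, (((star (w l) ⬝ᵥ w l).re ^ 2 : ℝ) : ℂ) := by
      refine (trace_sum univ F).trans (sum_congr rfl fun l _ ↦ ?_)
      rw [trace_vecMulVec, dotProduct_comm, star_tensorSquare_dotProduct, Complex.ofReal_pow,
        ← star_dotProduct_self_eq_re]
    rw [← Complex.re_sum, htrace, ← Complex.ofReal_sum, Complex.ofReal_re]
  have hfrob : ∑ P, ∑ Q, Complex.normSq (S P Q)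
      = ∑ l, ∑ m, Complex.normSq (star (w l) ⬝ᵥ w m) ^ 2 := by
    have htrace : (S * S).trace = ∑ l, ∑ m, (F l * F m).trace := by
      simp only [S, sum_mul_sum, trace_sum]
    rw [hS.trace_mul_self] at htrace
    simp only [F, trace_vecMulVec_star_mul_vecMulVec_star, star_tensorSquare_dotProduct,
      map_pow] at htrace
    exact_mod_cast htrace
  simpa only [hdiag, hfrob] using sq_sum_re_diag_le_of_swap_invariant S hswap

end Tensor

theorem rank_one_ic_povm_disturbance_ge_sic_general
    (d n : ℕ)
    (E : Fin n → Matrix (Fin d) (Fin d) ℂ)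
    (hE : ∀ i, (E i).PosSemidef)
    (hsum : ∑ i, E i = 1)
    (hrank : ∀ i, (E i).rank = 1) :
    (d : ℝ) ^ 2 * ((d : ℝ) - 1) / ((d : ℝ) + 1)
      ≤ ∑ l, ∑ m, (((hE l).sqrt * (hE m).sqrt).trace.re) ^ 2
          - 2 * ∑ l, (((hE l).sqrt).trace.re) ^ 2 + (d : ℝ) ^ 2 := by
  choose w hw using fun l ↦ (hE l).exists_sqrt_eq_vecMulVec_of_rank_eq_one (hrank l)
  have hpair (l m : Fin n) :
      ((hE l).sqrt * (hE m).sqrt).trace.re = Complex.normSq (star (w l) ⬝ᵥ w m) := by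
    rw [hw, hw, trace_vecMulVec_star_mul_vecMulVec_star, Complex.ofReal_re]
  have hsingle (l : Fin n) : ((hE l).sqrt).trace.re = (star (w l) ⬝ᵥ w l).re := by
    rw [hw, trace_vecMulVec, dotProduct_comm]
  have hnorm : ∑ l, (star (w l) ⬝ᵥ w l).re ^ 2 = d := by
    have htrE (l : Fin n) : (E l).trace.re = (star (w l) ⬝ᵥ w l).re ^ 2 := by
      rw [← (hE l).sqrt_mul_self, hpair, normSq_star_dotProduct_self]
    simp only [← htrE, ← Complex.re_sum, ← trace_sum, hsum, trace_one, Fintype.card_fin,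
      Complex.natCast_re]
  have hwelch := welch_bound_two w
  simp only [hpair, hsingle, hnorm, Fintype.card_fin] at hwelch ⊢
  set T := ∑ l, ∑ m, Complex.normSq (star (w l) ⬝ᵥ w m) ^ 2
  have hT : 2 * (d : ℝ) ≤ (d + 1) * T := by
    rcases (Nat.cast_nonneg (α := ℝ) d).eq_or_lt with hd | hd
    · rw [← hd, mul_zero, zero_add, one_mul]
      positivity
    · nlinarith
  rw [div_le_iff₀ (by positivity)]
  linear_combination hT

/-- For `d ≥ 2` and a rank-one informationally complete POVM `{E_i}` on `ℂ^d`
(each effect of rank one, with the real span of `{√E_i}` of dimension `d²`), the disturbance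
satisfies `D = Σ_{l,m} (tr(√E_l √E_m))² − 2 Σ_l (tr √E_l)² + d² ≥ d²(d−1)/(d+1)`. -/
theorem rank_one_ic_povm_disturbance_ge_sic
    (d n : ℕ) (hd : 2 ≤ d)
    (E : Fin n → Matrix (Fin d) (Fin d) ℂ)
    (hE : ∀ i, (E i).PosSemidef)
    (hsum : ∑ i, E i = 1)
    (hrank : ∀ i, (E i).rank = 1)
    (hspan : Module.finrank ℝ
      (Submodule.span ℝ (Set.range fun i => (hE i).sqrt)) = d ^ 2) :
    (d : ℝ) ^ 2 * ((d : ℝ) - 1) / ((d : ℝ) + 1)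
      ≤ ∑ l, ∑ m, (((hE l).sqrt * (hE m).sqrt).trace.re) ^ 2
          - 2 * ∑ l, (((hE l).sqrt).trace.re) ^ 2 + (d : ℝ) ^ 2 :=
  rank_one_ic_povm_disturbance_ge_sic_general d n E hE hsum hrank
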